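/- With Γ as above, an element x = Σ_{i≥1}[i]·x_i ∈ Γ_s (s ≥ 2) lies in ker Sq^1 ∩ ker Sq^2 if and only if: x_1 ∈ ker Sq^2, x_2 = x_1Sq^1, x_3Sq^1 = x_1Sq^3, and for each m ≥ 1: x_{4m} = x_{4m−1}Sq^1, x_{4m+1} = x_{4m−1}Sq^2, x_{4m+2} = x_{4m−1}Sq^2Sq^1, and x_{4m+3}Sq^1 = x_{4m−1}Sq^2Sq^3. -/

import Mathlib

noncomputable section

/-- `Γ`: the free associative F₂-algebra on non-commuting generators `[a]`,
modelled as the monoid algebra of the free monoid on ℕ (only letters `a ≥ 1`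
are used; the Steenrod action never produces the letter `0` from them). -/
abbrev Gam : Type := MonoidAlgebra (ZMod 2) (FreeMonoid ℕ)

/-- The generator `[a]` of `Γ`. -/
def gen (a : ℕ) : Gam := MonoidAlgebra.single (FreeMonoid.ofList [a]) 1

/-- The right Steenrod action on a word, defined on generators by
`[a]Sq^i = C(a−i, i)·[a−i]` (mod 2) and extended by the Cartan formula. -/
def sqWord : List ℕ → ℕ → Gam
  | [], n => if n = 0 then 1 else 0
  | a :: w, n =>
      ∑ p ∈ Finset.range (n + 1),
        (Nat.choose (a - p) p : ZMod 2) • (gen (a - p) * sqWord w (n - p))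

/-- The right Steenrod action on `Γ`: `SqG n x = x·Sq^n`. -/
def SqG (n : ℕ) (x : Gam) : Gam :=
  Finsupp.sum x.coeff fun w c => c • sqWord (FreeMonoid.toList w) n

/-- `x` is homogeneous of length `s` (i.e. `x ∈ Γ_s`). -/
def homLen (s : ℕ) (x : Gam) : Prop :=
  ∀ w ∈ x.coeff.support, (FreeMonoid.toList w).length = s

/-!
By the Cartan formula, `(Σ_i [i]·x_i)Sq^n = Σ_j [j]·Σ_{p ≤ n} C(j,p)·x_{j+p}Sq^{n-p}`, and
the decomposition is unique, so `x ∈ ker Sq¹ ∩ ker Sq²` iff for every `j`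
`x_j Sq¹ + j·x_{j+1} = 0` and `x_j Sq² + j·x_{j+1}Sq¹ + C(j,2)·x_{j+2} = 0`.
Mod 2 these coefficients depend only on `j mod 4`; sorting the equations by residue class gives
the stated conditions, once one uses the relations `Sq¹Sq¹ = 0`, `Sq¹Sq² = Sq³`, `Sq³Sq² = 0`
and `Sq²Sq² = Sq³Sq¹` (composition in the order of the right action). These hold on words by
induction on the length: the Cartan formula reduces them to identities between binomial
coefficients mod 2, which are periodic of period 4 in the letter and hence checked on finitely
many letters.
-/

open Finset

instance : CharP Gam 2 := charP_of_injective_algebraMap' (ZMod 2) 2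

/-- `sqLin n x` unfolds to `SqG n x`, which makes `SqG n` linear. -/
def sqLin (n : ℕ) : Gam →ₗ[ZMod 2] Gam :=
  Finsupp.linearCombination (ZMod 2) (fun w => sqWord (FreeMonoid.toList w) n) ∘ₗ
    (MonoidAlgebra.coeffLinearEquiv (ZMod 2)).toLinearMap

@[simp] theorem SqG_zero_right (n : ℕ) : SqG n 0 = 0 := map_zero (sqLin n)

@[simp] theorem SqG_add (n : ℕ) (x y : Gam) : SqG n (x + y) = SqG n x + SqG n y :=
  map_add (sqLin n) x y

@[simp] theorem SqG_smul (n : ℕ) (c : ZMod 2) (x : Gam) : SqG n (c • x) = c • SqG n x :=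
  map_smul (sqLin n) c x

theorem SqG_sum {ι : Type*} (n : ℕ) (s : Finset ι) (f : ι → Gam) :
    SqG n (∑ i ∈ s, f i) = ∑ i ∈ s, SqG n (f i) :=
  map_sum (sqLin n) f s

theorem SqG_single (n : ℕ) (w : FreeMonoid ℕ) (c : ZMod 2) :
    SqG n (MonoidAlgebra.single w c) = c • sqWord (FreeMonoid.toList w) n :=
  Finsupp.linearCombination_single _ _ _

theorem gen_mul_single (a : ℕ) (w : FreeMonoid ℕ) (c : ZMod 2) :
    gen a * MonoidAlgebra.single w c = MonoidAlgebra.single (FreeMonoid.of a * w) c := by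
  rw [gen, MonoidAlgebra.single_mul_single, one_mul]
  rfl

/-- `[a]Sq^k = sqCoeff a k • [a - k]`. -/
def sqCoeff (a k : ℕ) : ZMod 2 := ((a - k).choose k : ℕ)

theorem SqG_gen_mul (n a : ℕ) (y : Gam) :
    SqG n (gen a * y) = ∑ p ∈ range (n + 1), sqCoeff a p • (gen (a - p) * SqG (n - p) y) := by
  induction y using MonoidAlgebra.induction_linear with
  | zero => simp
  | add y z hy hz => simp only [mul_add, SqG_add, hy, hz, smul_add, sum_add_distrib]
  | single w c =>
    simp only [gen_mul_single, SqG_single, FreeMonoid.toList_of_mul, sqWord, smul_sum]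
    refine sum_congr rfl fun p _ => ?_
    rw [smul_comm, mul_smul_comm, sqCoeff]

theorem sqWord_zero (l : List ℕ) : sqWord l 0 = MonoidAlgebra.single (FreeMonoid.ofList l) 1 := by
  induction l with
  | nil => rfl
  | cons a l ih => simp [sqWord, ih, gen_mul_single]

@[simp] theorem SqG_zero (y : Gam) : SqG 0 y = y := by
  induction y using MonoidAlgebra.induction_linear with
  | zero => simp
  | add y z hy hz => simp [hy, hz]
  | single w c => rw [SqG_single, sqWord_zero, MonoidAlgebra.smul_single', mul_one]; rfl

@[simp] theorem sqCoeff_zero (a : ℕ) : sqCoeff a 0 = 1 := by simp [sqCoeff]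

theorem SqG_one_gen_mul (a : ℕ) (y : Gam) :
    SqG 1 (gen a * y) = gen a * SqG 1 y + sqCoeff a 1 • (gen (a - 1) * y) := by
  simp [SqG_gen_mul, sum_range_succ]

theorem SqG_two_gen_mul (a : ℕ) (y : Gam) :
    SqG 2 (gen a * y) = gen a * SqG 2 y + sqCoeff a 1 • (gen (a - 1) * SqG 1 y) +
      sqCoeff a 2 • (gen (a - 2) * y) := by
  simp [SqG_gen_mul, sum_range_succ]

theorem SqG_three_gen_mul (a : ℕ) (y : Gam) :
    SqG 3 (gen a * y) = gen a * SqG 3 y + sqCoeff a 1 • (gen (a - 1) * SqG 2 y) +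
      sqCoeff a 2 • (gen (a - 2) * SqG 1 y) + sqCoeff a 3 • (gen (a - 3) * y) := by
  simp [SqG_gen_mul, sum_range_succ]

theorem Nat.forall_of_add_four {P : ℕ → Prop} (n₀ : ℕ) (base : ∀ a < n₀ + 4, P a)
    (step : ∀ a, n₀ ≤ a → P a → P (a + 4)) (a : ℕ) : P a := by
  induction a using Nat.strong_induction_on with
  | _ a ih =>
    by_cases ha : a < n₀ + 4
    · exact base a ha
    · obtain ⟨b, rfl⟩ : ∃ b, a = b + 4 := ⟨a - 4, by omega⟩
      exact step b (by omega) (ih b (by omega))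

theorem choose_add_four_cast (n k : ℕ) (hk : k ≤ 3) :
    (((n + 4).choose k : ℕ) : ZMod 2) = ((n.choose k : ℕ) : ZMod 2) := by
  interval_cases k <;> simp [Nat.choose] <;> ring_nf <;> reduce_mod_char

theorem sqCoeff_add_four {a k : ℕ} (hk : k ≤ 3) (ha : k ≤ a) :
    sqCoeff (a + 4) k = sqCoeff a k := by
  rw [sqCoeff, sqCoeff, show a + 4 - k = a - k + 4 by omega, choose_add_four_cast _ _ hk]

theorem sqCoeff_sub_add_four {a b k : ℕ} (hk : k ≤ 3) (h : k + b ≤ a) :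
    sqCoeff (a + 4 - b) k = sqCoeff (a - b) k := by
  rw [show a + 4 - b = a - b + 4 by omega, sqCoeff_add_four hk (by omega)]

theorem sqCoeff_adem_relations (a : ℕ) :
    sqCoeff a 1 * sqCoeff (a - 1) 1 = 0 ∧ sqCoeff a 1 * sqCoeff (a - 1) 2 = sqCoeff a 3 ∧
      sqCoeff a 2 * sqCoeff (a - 2) 2 = 0 ∧ sqCoeff a 3 * sqCoeff (a - 3) 1 = 0 ∧
      sqCoeff a 3 * sqCoeff (a - 3) 2 = 0 := by
  induction a using Nat.forall_of_add_four 5 with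
  | base => decide +revert
  | step a _ h => simpa (disch := omega) only [sqCoeff_add_four, sqCoeff_sub_add_four] using h

theorem choose_two_cast (j : ℕ) :
    ((j.choose 2 : ℕ) : ZMod 2) = ((j / 2 % 2 : ℕ) : ZMod 2) := by
  induction j using Nat.forall_of_add_four 0 with
  | base => decide +revert
  | step j _ h =>
    rw [choose_add_four_cast j 2 (by norm_num), h, show (j + 4) / 2 % 2 = j / 2 % 2 by omega]

theorem Gam.induction_gen_mul {P : Gam → Prop} (zero : P 0) (one : P 1)
    (gen_mul : ∀ a y, P y → P (gen a * y)) (add : ∀ y z, P y → P z → P (y + z))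
    (x : Gam) : P x := by
  induction x using MonoidAlgebra.induction_linear with
  | zero => exact zero
  | add y z hy hz => exact add y z hy hz
  | single w c =>
    obtain rfl | rfl : c = 0 ∨ c = 1 := by revert c; decide
    · simpa using zero
    · induction w using FreeMonoid.inductionOn' with
      | one => exact one
      | of_mul a w hw => rw [← gen_mul_single]; exact gen_mul a _ hw

theorem SqG_adem_relations (y : Gam) :
    SqG 1 (SqG 1 y) = 0 ∧ SqG 2 (SqG 1 y) = SqG 3 y ∧ SqG 2 (SqG 3 y) = 0 ∧
      SqG 2 (SqG 2 y) = SqG 1 (SqG 3 y) := by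
  induction y using Gam.induction_gen_mul with
  | zero => simp
  | one =>
    have h : ∀ n, SqG n 1 = if n = 0 then 1 else 0 := fun n => by
      rw [MonoidAlgebra.one_def, SqG_single, one_smul]; rfl
    simp [h]
  | add y z hy hz => simp_all
  | gen_mul a u hu =>
    obtain ⟨h11, h21, h23, h22⟩ := hu
    obtain ⟨c11, c12, c22, c31, c32⟩ := sqCoeff_adem_relations a
    refine ⟨?_, ?_, ?_, ?_⟩ <;> rw [← CharTwo.add_eq_zero] <;>
      simp only [SqG_one_gen_mul, SqG_two_gen_mul, SqG_three_gen_mul, SqG_add, SqG_smul,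
        h11, h21, h23, h22, smul_add, smul_smul, Nat.sub_sub, c11, c12, c22, c31, c32,
        mul_zero, smul_zero, zero_smul, add_zero, zero_add] <;>
      abel_nf <;> simp only [CharTwo.two_zsmul, add_zero]

theorem SqG_one_SqG_one (y : Gam) : SqG 1 (SqG 1 y) = 0 := (SqG_adem_relations y).1
theorem SqG_two_SqG_one (y : Gam) : SqG 2 (SqG 1 y) = SqG 3 y := (SqG_adem_relations y).2.1
theorem SqG_two_SqG_three (y : Gam) : SqG 2 (SqG 3 y) = 0 := (SqG_adem_relations y).2.2.1
theorem SqG_two_SqG_two (y : Gam) : SqG 2 (SqG 2 y) = SqG 1 (SqG 3 y) := (SqG_adem_relations y).2.2.2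

theorem coeff_gen_mul_of_mul (i j : ℕ) (z : Gam) (w : FreeMonoid ℕ) :
    (gen i * z).coeff (FreeMonoid.of j * w) = if i = j then z.coeff w else 0 := by
  split_ifs with hij
  · subst hij
    rw [gen, ← FreeMonoid.ofList_singleton, MonoidAlgebra.coeff_single_mul_eq_mul_coeff w,
      one_mul]
    exact fun _ _ => mul_right_inj _
  · refine MonoidAlgebra.coeff_single_mul_of_forall_mul_ne _ _ fun d hd => hij ?_
    exact (by simpa using congrArg FreeMonoid.toList hd : i = j ∧ d = w).1

theorem eq_zero_of_sum_gen_mul_eq_zero {N : ℕ} {y : ℕ → Gam}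
    (h : ∑ i ∈ range N, gen i * y i = 0) {j : ℕ} (hj : j < N) : y j = 0 := by
  ext w
  simpa [MonoidAlgebra.coeff_sum, Finsupp.finsetSum_apply, coeff_gen_mul_of_mul, hj] using
    congrArg (fun x : Gam => x.coeff (FreeMonoid.of j * w)) h

/-- The coefficient of `[j]` in `(∑ i, [i]·x_i)·Sq^n`. -/
def sqComponent (n : ℕ) (x_ : ℕ → Gam) (j : ℕ) : Gam :=
  ∑ p ∈ range (n + 1), ((j.choose p : ℕ) : ZMod 2) • SqG (n - p) (x_ (j + p))

theorem sum_sqCoeff_smul_gen_sub_mul {p N : ℕ} {y : ℕ → Gam}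
    (hy : ∀ i, N ≤ i → y i = 0) :
    ∑ i ∈ range N, sqCoeff i p • (gen (i - p) * y i) =
      ∑ j ∈ range N, ((j.choose p : ℕ) : ZMod 2) • (gen j * y (j + p)) := by
  set f : ℕ → Gam := fun i => sqCoeff i p • (gen (i - p) * y i)
  have tail : ∑ i ∈ range p, f (N + i) = 0 :=
    sum_eq_zero fun i _ => by simp [f, hy (N + i) (by omega)]
  have head : ∑ i ∈ range p, f i = 0 := sum_eq_zero fun i hi => by
    have hip : i < p := mem_range.1 hi
    simp [f, sqCoeff, Nat.sub_eq_zero_of_le hip.le, Nat.choose_eq_zero_of_lt (pos_of_gt hip)]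
  calc ∑ i ∈ range N, f i = ∑ i ∈ range (p + N), f i := by
        rw [add_comm p, sum_range_add, tail, add_zero]
    _ = _ := by
        rw [sum_range_add, head, zero_add]
        refine sum_congr rfl fun j _ => ?_
        simp [f, sqCoeff, add_comm p j]

theorem SqG_sum_gen_mul (n N : ℕ) {x_ : ℕ → Gam} (hN : ∀ i, N ≤ i → x_ i = 0) :
    SqG n (∑ i ∈ range N, gen i * x_ i) = ∑ j ∈ range N, gen j * sqComponent n x_ j := by
  simp only [SqG_sum, SqG_gen_mul, sqComponent, mul_sum, mul_smul_comm]
  rw [sum_comm, sum_comm (s := range N)]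
  refine sum_congr rfl fun p _ => sum_sqCoeff_smul_gen_sub_mul fun i hi => ?_
  simp [hN i hi]

theorem SqG_sum_gen_mul_eq_zero_iff (n N : ℕ) {x_ : ℕ → Gam}
    (hN : ∀ i, N ≤ i → x_ i = 0) :
    SqG n (∑ i ∈ range N, gen i * x_ i) = 0 ↔ ∀ j, sqComponent n x_ j = 0 := by
  rw [SqG_sum_gen_mul n N hN]
  refine ⟨fun h j => ?_, fun h => sum_eq_zero fun j _ => by rw [h, mul_zero]⟩
  rcases lt_or_ge j N with hj | hj
  · exact eq_zero_of_sum_gen_mul_eq_zero h hj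
  · exact sum_eq_zero fun p _ => by rw [hN _ (by omega), SqG_zero_right, smul_zero]

theorem sqComponent_one (x_ : ℕ → Gam) (j : ℕ) :
    sqComponent 1 x_ j = SqG 1 (x_ j) + (j : ZMod 2) • x_ (j + 1) := by
  simp [sqComponent, sum_range_succ]

theorem sqComponent_two (x_ : ℕ → Gam) (j : ℕ) :
    sqComponent 2 x_ j = SqG 2 (x_ j) + (j : ZMod 2) • SqG 1 (x_ (j + 1)) +
      ((j.choose 2 : ℕ) : ZMod 2) • x_ (j + 2) := by
  simp [sqComponent, sum_range_succ]

section Residues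

variable (x_ : ℕ → Gam) {j : ℕ}

theorem sqComponents_eq_zero_iff_of_mod_four_eq_zero (hj : j % 4 = 0) :
    sqComponent 1 x_ j = 0 ∧ sqComponent 2 x_ j = 0 ↔
      SqG 1 (x_ j) = 0 ∧ SqG 2 (x_ j) = 0 := by
  simp [sqComponent_one, sqComponent_two, CharTwo.natCast_eq_mod j, choose_two_cast,
    show j % 2 = 0 by omega, show j / 2 % 2 = 0 by omega]

theorem sqComponents_eq_zero_iff_of_mod_four_eq_one (hj : j % 4 = 1) :
    sqComponent 1 x_ j = 0 ∧ sqComponent 2 x_ j = 0 ↔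
      x_ (j + 1) = SqG 1 (x_ j) ∧ SqG 2 (x_ j) = 0 := by
  simp [sqComponent_one, sqComponent_two, CharTwo.natCast_eq_mod j, choose_two_cast,
    show j % 2 = 1 by omega, show j / 2 % 2 = 0 by omega, CharTwo.add_eq_zero]
  constructor <;> rintro ⟨h1, h2⟩
  · exact ⟨h1.symm, by rw [h2, ← h1, SqG_one_SqG_one]⟩
  · exact ⟨h1.symm, by rw [h2, h1, SqG_one_SqG_one]⟩

theorem sqComponents_eq_zero_iff_of_mod_four_eq_two (hj : j % 4 = 2) :
    sqComponent 1 x_ j = 0 ∧ sqComponent 2 x_ j = 0 ↔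
      SqG 1 (x_ j) = 0 ∧ x_ (j + 2) = SqG 2 (x_ j) := by
  simp [sqComponent_one, sqComponent_two, CharTwo.natCast_eq_mod j, choose_two_cast,
    show j % 2 = 0 by omega, show j / 2 % 2 = 1 by omega, CharTwo.add_eq_zero]
  exact fun _ => eq_comm

theorem sqComponents_eq_zero_iff_of_mod_four_eq_three (hj : j % 4 = 3) :
    sqComponent 1 x_ j = 0 ∧ sqComponent 2 x_ j = 0 ↔
      x_ (j + 1) = SqG 1 (x_ j) ∧ x_ (j + 2) = SqG 2 (x_ j) := by
  simp [sqComponent_one, sqComponent_two, CharTwo.natCast_eq_mod j, choose_two_cast,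
    show j % 2 = 1 by omega, show j / 2 % 2 = 1 by omega, CharTwo.add_eq_zero]
  constructor <;> rintro ⟨h1, h2⟩
  · exact ⟨h1.symm, by rw [← h2, ← h1, SqG_one_SqG_one, add_zero]⟩
  · exact ⟨h1.symm, by rw [h2, h1, SqG_one_SqG_one, add_zero]⟩

end Residues

/-- The right-hand side of the theorem, with the block of `m ≥ 1` indexed by `k = m - 1`
(so `x_{4m-1} = x_{4k+3}`). -/
def KerConditions (x_ : ℕ → Gam) : Prop :=
  SqG 2 (x_ 1) = 0 ∧ x_ 2 = SqG 1 (x_ 1) ∧ SqG 1 (x_ 3) = SqG 3 (x_ 1) ∧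
    ∀ k, x_ (4 * k + 4) = SqG 1 (x_ (4 * k + 3)) ∧ x_ (4 * k + 5) = SqG 2 (x_ (4 * k + 3)) ∧
      x_ (4 * k + 6) = SqG 1 (SqG 2 (x_ (4 * k + 3))) ∧
      SqG 1 (x_ (4 * k + 7)) = SqG 3 (SqG 2 (x_ (4 * k + 3)))

theorem kerConditions_iff (x_ : ℕ → Gam) :
    KerConditions x_ ↔
      SqG 2 (x_ 1) = 0 ∧ x_ 2 = SqG 1 (x_ 1) ∧ SqG 1 (x_ 3) = SqG 3 (x_ 1) ∧
       ∀ m : ℕ, 1 ≤ m →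
         x_ (4 * m) = SqG 1 (x_ (4 * m - 1)) ∧
         x_ (4 * m + 1) = SqG 2 (x_ (4 * m - 1)) ∧
         x_ (4 * m + 2) = SqG 1 (SqG 2 (x_ (4 * m - 1))) ∧
         SqG 1 (x_ (4 * m + 3)) = SqG 3 (SqG 2 (x_ (4 * m - 1))) := by
  refine and_congr_right' <| and_congr_right' <| and_congr_right'
    ⟨fun h m hm => ?_, fun h k => ?_⟩
  · obtain ⟨k, rfl⟩ := Nat.exists_eq_add_of_le' hm
    simpa [mul_add, add_assoc] using h k
  · simpa [mul_add, add_assoc] using h (k + 1) le_add_self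

theorem kerConditions_of_sqComponents {x_ : ℕ → Gam}
    (h : ∀ j, sqComponent 1 x_ j = 0 ∧ sqComponent 2 x_ j = 0) : KerConditions x_ := by
  have h1 (j : ℕ) (hj : j % 4 = 1) : x_ (j + 1) = SqG 1 (x_ j) ∧ SqG 2 (x_ j) = 0 :=
    (sqComponents_eq_zero_iff_of_mod_four_eq_one x_ hj).1 (h j)
  have h3 (j : ℕ) (hj : j % 4 = 3) : x_ (j + 1) = SqG 1 (x_ j) ∧ x_ (j + 2) = SqG 2 (x_ j) :=
    (sqComponents_eq_zero_iff_of_mod_four_eq_three x_ hj).1 (h j)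
  have hSq1 (j : ℕ) (hj : j % 4 = 1) : SqG 1 (x_ (j + 2)) = SqG 3 (x_ j) := by
    have hx3 := (h3 (j + 2) (by omega)).1
    have hx3' := ((sqComponents_eq_zero_iff_of_mod_four_eq_two x_ (j := j + 1) (by omega)).1
      (h _)).2
    simp only [add_assoc, Nat.reduceAdd] at hx3 hx3'
    rw [← hx3, hx3', (h1 j hj).1, SqG_two_SqG_one]
  refine ⟨(h1 1 rfl).2, (h1 1 rfl).1, hSq1 1 rfl, fun k => ?_⟩
  obtain ⟨hx4, hx5⟩ := h3 (4 * k + 3) (by omega)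
  have hx6 := (h1 (4 * k + 5) (by omega)).1
  have hx7 := hSq1 (4 * k + 5) (by omega)
  simp only [add_assoc, Nat.reduceAdd] at hx4 hx5 hx6 hx7
  rw [hx6, hx7, hx5]
  exact ⟨hx4, rfl, rfl, rfl⟩

theorem sqComponents_of_kerConditions {x_ : ℕ → Gam} (h0 : x_ 0 = 0) (hc : KerConditions x_)
    (j : ℕ) : sqComponent 1 x_ j = 0 ∧ sqComponent 2 x_ j = 0 := by
  obtain ⟨H1, H2, H3, H4⟩ := hc
  have hSq1x3 (k : ℕ) : SqG 1 (x_ (4 * k + 3)) = SqG 3 (x_ (4 * k + 1)) := by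
    cases k with
    | zero => exact H3
    | succ k =>
      simp only [mul_add, mul_one, add_assoc, Nat.reduceAdd]
      rw [(H4 k).2.2.2, (H4 k).2.1]
  have hSq3x3 (k : ℕ) : SqG 3 (x_ (4 * k + 3)) = 0 := by
    rw [← SqG_two_SqG_one, hSq1x3, SqG_two_SqG_three]
  have hx2 (k : ℕ) : x_ (4 * k + 2) = SqG 1 (x_ (4 * k + 1)) ∧ SqG 2 (x_ (4 * k + 1)) = 0 := by
    cases k with
    | zero => exact ⟨H2, H1⟩
    | succ k =>
      simp only [mul_add, mul_one, add_assoc, Nat.reduceAdd]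
      rw [(H4 k).2.2.1, (H4 k).2.1, SqG_two_SqG_two, hSq3x3, SqG_zero_right]
      exact ⟨rfl, rfl⟩
  obtain ⟨k, r, hr, rfl⟩ : ∃ k r, r < 4 ∧ j = 4 * k + r :=
    ⟨j / 4, j % 4, j.mod_lt (by norm_num), (j.div_add_mod 4).symm⟩
  interval_cases r
  · rw [sqComponents_eq_zero_iff_of_mod_four_eq_zero x_ (by omega)]
    cases k with
    | zero => simp [h0]
    | succ k =>
      simp only [mul_add, mul_one, add_zero]
      rw [(H4 k).1, SqG_one_SqG_one, SqG_two_SqG_one, hSq3x3]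
      exact ⟨rfl, rfl⟩
  · exact (sqComponents_eq_zero_iff_of_mod_four_eq_one x_ (by omega)).2 (hx2 k)
  · rw [sqComponents_eq_zero_iff_of_mod_four_eq_two x_ (by omega)]
    simp only [add_assoc, Nat.reduceAdd]
    rw [(hx2 k).1, SqG_one_SqG_one, SqG_two_SqG_one, ← hSq1x3, (H4 k).1]
    exact ⟨rfl, rfl⟩
  · exact (sqComponents_eq_zero_iff_of_mod_four_eq_three x_ (by omega)).2
      ⟨(H4 k).1, (H4 k).2.1⟩

theorem stmt_14_general (x : Gam) (x_ : ℕ → Gam)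
    (hfin : (Function.support x_).Finite) (h0 : x_ 0 = 0)
    (hx : x = ∑ᶠ i : ℕ, gen i * x_ i) :
    (SqG 1 x = 0 ∧ SqG 2 x = 0) ↔
      (SqG 2 (x_ 1) = 0 ∧
       x_ 2 = SqG 1 (x_ 1) ∧
       SqG 1 (x_ 3) = SqG 3 (x_ 1) ∧
       ∀ m : ℕ, 1 ≤ m →
         x_ (4 * m) = SqG 1 (x_ (4 * m - 1)) ∧
         x_ (4 * m + 1) = SqG 2 (x_ (4 * m - 1)) ∧
         x_ (4 * m + 2) = SqG 1 (SqG 2 (x_ (4 * m - 1))) ∧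
         SqG 1 (x_ (4 * m + 3)) = SqG 3 (SqG 2 (x_ (4 * m - 1)))) := by
  obtain ⟨N, hN⟩ := hfin.toFinset.exists_nat_subset_range
  have hsupp : Function.support x_ ⊆ range N := by simpa using hN
  have hvanish (i : ℕ) (hi : N ≤ i) : x_ i = 0 :=
    Function.notMem_support.1 fun h => by simpa using (mem_range.1 (hsupp h)).trans_le hi
  have hxN : x = ∑ i ∈ range N, gen i * x_ i :=
    hx.trans <| finsum_eq_sum_of_support_subset _ <|
      (Function.support_mul_subset_right _ _).trans hsupp
  rw [← kerConditions_iff, hxN, SqG_sum_gen_mul_eq_zero_iff 1 N hvanish,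
    SqG_sum_gen_mul_eq_zero_iff 2 N hvanish, ← forall_and]
  exact ⟨kerConditions_of_sqComponents, fun hc => sqComponents_of_kerConditions h0 hc⟩

/-- An element `x = Σ_{i≥1}[i]·x_i ∈ Γ_s` (`s ≥ 2`) lies in
`ker Sq¹ ∩ ker Sq²` if and only if: `x₁ ∈ ker Sq²`, `x₂ = x₁Sq¹`,
`x₃Sq¹ = x₁Sq³`, and for each `m ≥ 1`: `x_{4m} = x_{4m−1}Sq¹`,
`x_{4m+1} = x_{4m−1}Sq²`, `x_{4m+2} = x_{4m−1}Sq²Sq¹`, and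
`x_{4m+3}Sq¹ = x_{4m−1}Sq²Sq³`. -/
theorem stmt_14 (s : ℕ) (hs : 2 ≤ s) (x : Gam) (x_ : ℕ → Gam)
    (hxlen : homLen s x) (hcomplen : ∀ i, homLen (s - 1) (x_ i))
    (hfin : (Function.support x_).Finite) (h0 : x_ 0 = 0)
    (hx : x = ∑ᶠ i : ℕ, gen i * x_ i) :
    (SqG 1 x = 0 ∧ SqG 2 x = 0) ↔
      (SqG 2 (x_ 1) = 0 ∧
       x_ 2 = SqG 1 (x_ 1) ∧
       SqG 1 (x_ 3) = SqG 3 (x_ 1) ∧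
       ∀ m : ℕ, 1 ≤ m →
         x_ (4 * m) = SqG 1 (x_ (4 * m - 1)) ∧
         x_ (4 * m + 1) = SqG 2 (x_ (4 * m - 1)) ∧
         x_ (4 * m + 2) = SqG 1 (SqG 2 (x_ (4 * m - 1))) ∧
         SqG 1 (x_ (4 * m + 3)) = SqG 3 (SqG 2 (x_ (4 * m - 1)))) :=
  stmt_14_general x x_ hfin h0 hx
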